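/- Let X be a Polish space with its Borel σ-algebra and d : X × X → ℝ≥0∞ a Borel measurable cost function that is a (possibly extended-valued) pseudometric: d(x,x) = 0, d is symmetric, and d(x,x'') ≤ d(x,x') + d(x',x'') for all x, x', x''. Then the Wasserstein cost W(d) is a pseudometric on the space of Borel probability measures on X: W(d)(μ,μ) = 0, W(d)(μ,ν) = W(d)(ν,μ), and W(d)(μ,ρ) ≤ W(d)(μ,ν) + W(d)(ν,ρ) for all Borel probability measures μ, ν, ρ on X. -/

import Mathlib

open MeasureTheory ProbabilityTheory
open scoped ENNReal

/-!
Reflexivity comes from the diagonal coupling `x ↦ (x, x)` and symmetry from swapping the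
coordinates of a coupling. For the triangle inequality, couplings `S₁` of `(μ, ν)` and `S₂` of
`(ν, ρ)` are glued along their common marginal `ν` by disintegrating `S₂` over its first
coordinate (this is where the standard Borel structure enters); the outer two coordinates of the
glued measure form a coupling of `(μ, ρ)`, whose cost is bounded by `∫ c dS₁ + ∫ c dS₂` through
the pointwise triangle inequality.
-/

/-- The Wasserstein (Kantorovich) cost: infimum of the transport cost over all
couplings of `μ` and `ν`. -/
noncomputable def wassersteinCost {Z : Type*} [MeasurableSpace Z]
    (c : Z × Z → ℝ≥0∞) (μ ν : Measure Z) : ℝ≥0∞ :=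
  ⨅ (S : Measure (Z × Z)) (_ : IsProbabilityMeasure S)
    (_ : S.map Prod.fst = μ) (_ : S.map Prod.snd = ν), ∫⁻ p, c p ∂S

namespace MeasureTheory.Measure

variable {X Y Z : Type*} [MeasurableSpace X] [MeasurableSpace Y] [MeasurableSpace Z]
  [StandardBorelSpace Z] [Nonempty Z]

noncomputable def glue (S₁ : Measure (X × Y)) (S₂ : Measure (Y × Z))
    [IsFiniteMeasure S₂] : Measure ((X × Y) × Z) :=
  S₁ ⊗ₘ S₂.condKernel.comap Prod.snd measurable_snd

variable (S₁ : Measure (X × Y)) (S₂ : Measure (Y × Z)) [IsFiniteMeasure S₂]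

instance isProbabilityMeasure_glue [IsProbabilityMeasure S₁] :
    IsProbabilityMeasure (S₁.glue S₂) := by
  unfold glue; infer_instance

theorem map_fst_glue [SFinite S₁] : (S₁.glue S₂).map Prod.fst = S₁ :=
  fst_compProd _ _

theorem map_glue_of_map_snd_eq [SFinite S₁] (h : S₁.map Prod.snd = S₂.map Prod.fst) :
    (S₁.glue S₂).map (fun p => (p.1.2, p.2)) = S₂ := by
  have hf : Measurable fun p : (X × Y) × Z => (p.1.2, p.2) := by fun_prop
  ext s hs
  have hκ : Measurable fun y => S₂.condKernel y (Prod.mk y ⁻¹' s) :=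
    Kernel.measurable_kernel_prodMk_left hs
  calc (S₁.glue S₂).map (fun p => (p.1.2, p.2)) s
      = ∫⁻ p, S₂.condKernel p.2 (Prod.mk p.2 ⁻¹' s) ∂S₁ := by
        rw [map_apply hf hs, glue, compProd_apply (hf hs)]
        rfl
    _ = ∫⁻ y, S₂.condKernel y (Prod.mk y ⁻¹' s) ∂(S₂.map Prod.fst) := by
        rw [← h, lintegral_map hκ measurable_snd]
    _ = S₂ s := by
        conv_rhs => rw [← S₂.disintegrate S₂.condKernel, compProd_apply hs]
        rfl

end MeasureTheory.Measure

section Wasserstein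

variable {X : Type*} [MeasurableSpace X] (c : X × X → ℝ≥0∞)

theorem wassersteinCost_le_lintegral {μ ν : Measure X} (S : Measure (X × X))
    [IsProbabilityMeasure S] (h₁ : S.map Prod.fst = μ) (h₂ : S.map Prod.snd = ν) :
    wassersteinCost c μ ν ≤ ∫⁻ p, c p ∂S :=
  iInf_le_of_le S <| iInf_le_of_le ‹_› <| iInf_le_of_le h₁ <| iInf_le _ h₂

theorem wassersteinCost_self_eq_zero (hc : ∀ x, c (x, x) = 0) (μ : Measure X)
    [IsProbabilityMeasure μ] : wassersteinCost c μ μ = 0 := by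
  have hdiag : Measurable fun x : X => (x, x) := measurable_id.prodMk measurable_id
  have : IsProbabilityMeasure (μ.map fun x => (x, x)) :=
    Measure.isProbabilityMeasure_map hdiag.aemeasurable
  refine nonpos_iff_eq_zero.mp <|
    (wassersteinCost_le_lintegral c (μ.map fun x => (x, x)) ?_ ?_).trans ?_
  · rw [Measure.map_map measurable_fst hdiag]; exact Measure.map_id
  · rw [Measure.map_map measurable_snd hdiag]; exact Measure.map_id
  · calc ∫⁻ p, c p ∂μ.map (fun x => (x, x)) ≤ ∫⁻ x, c (x, x) ∂μ := lintegral_map_le _ _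
      _ = 0 := by simp [hc]

theorem wassersteinCost_comp_swap_le (μ ν : Measure X) :
    wassersteinCost (c ∘ Prod.swap) ν μ ≤ wassersteinCost c μ ν := by
  refine le_iInf fun S => le_iInf fun _ => le_iInf fun h₁ => le_iInf fun h₂ => ?_
  have : IsProbabilityMeasure (S.map Prod.swap) :=
    Measure.isProbabilityMeasure_map measurable_swap.aemeasurable
  refine (wassersteinCost_le_lintegral _ (S.map Prod.swap) ?_ ?_).trans_eq ?_
  · rwa [Measure.map_map measurable_fst measurable_swap]
  · rwa [Measure.map_map measurable_snd measurable_swap]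
  · exact lintegral_map_equiv (c ∘ Prod.swap) MeasurableEquiv.prodComm

theorem wassersteinCost_comm (hc : ∀ x y, c (x, y) = c (y, x)) (μ ν : Measure X) :
    wassersteinCost c μ ν = wassersteinCost c ν μ := by
  have hswap : c ∘ Prod.swap = c := funext fun p => hc p.2 p.1
  have h := wassersteinCost_comp_swap_le c
  rw [hswap] at h
  exact le_antisymm (h ν μ) (h μ ν)

variable [StandardBorelSpace X]

theorem wassersteinCost_le_lintegral_add (hc : Measurable c)
    (hc_triangle : ∀ x y z, c (x, z) ≤ c (x, y) + c (y, z)) {μ ν ρ : Measure X}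
    (S₁ S₂ : Measure (X × X)) [IsProbabilityMeasure S₁] [IsProbabilityMeasure S₂]
    (h₁ : S₁.map Prod.fst = μ) (h₁₂ : S₁.map Prod.snd = ν) (h₂₁ : S₂.map Prod.fst = ν)
    (h₂ : S₂.map Prod.snd = ρ) :
    wassersteinCost c μ ρ ≤ ∫⁻ p, c p ∂S₁ + ∫⁻ p, c p ∂S₂ := by
  have : Nonempty X := (nonempty_of_isProbabilityMeasure S₁).map Prod.fst
  set π := S₁.glue S₂
  have hπ₁ : π.map Prod.fst = S₁ := Measure.map_fst_glue S₁ S₂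
  have hπ₂ : π.map (fun p => (p.1.2, p.2)) = S₂ :=
    Measure.map_glue_of_map_snd_eq S₁ S₂ (h₁₂.trans h₂₁.symm)
  have hf₂ : Measurable fun p : (X × X) × X => (p.1.2, p.2) := by fun_prop
  have hf : Measurable fun p : (X × X) × X => (p.1.1, p.2) := by fun_prop
  have : IsProbabilityMeasure (π.map fun p => (p.1.1, p.2)) :=
    Measure.isProbabilityMeasure_map hf.aemeasurable
  refine (wassersteinCost_le_lintegral c (π.map fun p => (p.1.1, p.2)) ?_ ?_).trans ?_
  · rw [Measure.map_map measurable_fst hf, ← h₁, ← hπ₁,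
      Measure.map_map measurable_fst measurable_fst]
    rfl
  · rw [Measure.map_map measurable_snd hf, ← h₂, ← hπ₂, Measure.map_map measurable_snd hf₂]
    rfl
  calc ∫⁻ p, c p ∂π.map (fun p => (p.1.1, p.2))
      = ∫⁻ p, c (p.1.1, p.2) ∂π := lintegral_map hc hf
    _ ≤ ∫⁻ p, c p.1 + c (p.1.2, p.2) ∂π := lintegral_mono fun p => hc_triangle _ _ _
    _ = ∫⁻ p, c p.1 ∂π + ∫⁻ p, c (p.1.2, p.2) ∂π :=
        lintegral_add_left (hc.comp measurable_fst) _
    _ = ∫⁻ p, c p ∂S₁ + ∫⁻ p, c p ∂S₂ := by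
        rw [← hπ₁, ← hπ₂, lintegral_map hc measurable_fst, lintegral_map hc hf₂]

theorem wassersteinCost_triangle (hc : Measurable c)
    (hc_triangle : ∀ x y z, c (x, z) ≤ c (x, y) + c (y, z)) (μ ν ρ : Measure X) :
    wassersteinCost c μ ρ ≤ wassersteinCost c μ ν + wassersteinCost c ν ρ := by
  simp only [wassersteinCost, ENNReal.iInf_add, ENNReal.add_iInf, le_iInf_iff]
  intro S₂ _ h₂₁ h₂ S₁ _ h₁ h₁₂
  exact wassersteinCost_le_lintegral_add c hc hc_triangle S₁ S₂ h₁ h₁₂ h₂₁ h₂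

end Wasserstein

/-- the Wasserstein cost of an extended-valued measurable pseudometric
is a pseudometric on Borel probability measures on a Polish space. -/
theorem wassersteinCost_pseudometric
    {X : Type*} [TopologicalSpace X] [PolishSpace X] [MeasurableSpace X] [BorelSpace X]
    (d : X × X → ℝ≥0∞) (hd : Measurable d)
    (h_refl : ∀ x, d (x, x) = 0)
    (h_symm : ∀ x x', d (x, x') = d (x', x))
    (h_triangle : ∀ x x' x'', d (x, x'') ≤ d (x, x') + d (x', x'')) :
    (∀ μ : Measure X, IsProbabilityMeasure μ → wassersteinCost d μ μ = 0) ∧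
    (∀ μ ν : Measure X, IsProbabilityMeasure μ → IsProbabilityMeasure ν →
      wassersteinCost d μ ν = wassersteinCost d ν μ) ∧
    (∀ μ ν ρ : Measure X, IsProbabilityMeasure μ → IsProbabilityMeasure ν →
      IsProbabilityMeasure ρ →
      wassersteinCost d μ ρ ≤ wassersteinCost d μ ν + wassersteinCost d ν ρ) :=
  ⟨fun μ _ => wassersteinCost_self_eq_zero d h_refl μ,
    fun μ ν _ _ => wassersteinCost_comm d h_symm μ ν,
    fun μ ν ρ _ _ _ => wassersteinCost_triangle d hd h_triangle μ ν ρ⟩
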